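/- Let p ≥ 0 be an integer, let c > 0, and let m be a positive integer with m < 2p + 3. Let a_1, …, a_m be distinct real numbers and A_1, …, A_m real coefficients. If the function φ(x) = Σ_{j=1}^{m} A_j · K(x, a_j) has compact support, then A_j = 0 for all j = 1, …, m. In other words, there exists no kernel packet of degree lower than 2ν + 2 for the half-integer Matérn kernel with smoothness ν = p + 1/2. -/

import Mathlib

/-!
For `x` to the right of every node, `e^{cx} φ(x) = ∑ⱼ Aⱼ e^{c aⱼ} P_p(x - aⱼ)` is a polynomial;
as it vanishes for large `x` and the translates of the degree-`p` polynomial `P_p` span all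
polynomials of degree `≤ p`, we get `∑ⱼ Aⱼ e^{c aⱼ} q(aⱼ) = 0` for all such `q`, and symmetrically
`∑ⱼ Aⱼ e^{-c aⱼ} q(aⱼ) = 0` from the left tail. Hence `∑ⱼ Aⱼ g(aⱼ) = 0` for every
`g = r e^{cx} + s e^{-cx}` with `deg r, deg s ≤ p`. By Rolle's theorem a nonzero such `g` has at
most `2p + 1` zeros, so this `(2p + 2)`-dimensional space interpolates arbitrary values at
`m ≤ 2p + 2` points; interpolating the indicator of `aⱼ` gives `Aⱼ = 0`.
-/

/-- The polynomial factor `P_p(u) = (p! / (2p)!) ∑_{j=0}^{p} ((p+j)! / (j! (p-j)!)) (2cu)^{p-j}`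
appearing in the half-integer Matérn kernel. -/
noncomputable def maternPoly (p : ℕ) (c : ℝ) (u : ℝ) : ℝ :=
  ((p.factorial : ℝ) / ((2 * p).factorial : ℝ)) *
    ∑ j ∈ Finset.range (p + 1),
      (((p + j).factorial : ℝ) / ((j.factorial : ℝ) * ((p - j).factorial : ℝ))) *
        (2 * c * u) ^ (p - j)

/-- The half-integer Matérn kernel with smoothness `ν = p + 1/2`:
`K(x, x') = P_p(|x - x'|) exp (-c |x - x'|)`. -/
noncomputable def maternKernel (p : ℕ) (c : ℝ) (x x' : ℝ) : ℝ :=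
  maternPoly p c |x - x'| * Real.exp (-(c * |x - x'|))

open Polynomial Finset Filter

theorem degreeLT_succ_le_sup_span {K : Type*} [Field K] {n : ℕ} {f : K[X]} (hf : f.degree = n) :
    K[X]_(n + 1) ≤ K[X]_n ⊔ K ∙ f := by
  intro q hq
  have hfn : f.coeff n ≠ 0 := by
    rw [← natDegree_eq_of_degree_eq_some hf]
    exact leadingCoeff_ne_zero.2 (ne_zero_of_degree_gt (n := ⊥) (by simp [hf]))
  refine Submodule.mem_sup.2 ⟨q - (q.coeff n / f.coeff n) • f, ?_,
    (q.coeff n / f.coeff n) • f, Submodule.smul_mem _ _ (Submodule.mem_span_singleton_self f),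
    sub_add_cancel _ _⟩
  rw [mem_degreeLT, degree_lt_iff_coeff_zero] at hq ⊢
  intro k hk
  rcases hk.eq_or_lt with rfl | hk
  · simp [hfn]
  · have hfk : f.coeff k = 0 := coeff_eq_zero_of_degree_lt (by rw [hf]; exact_mod_cast hk)
    simp [hq k hk, hfk]

theorem sum_C_mul_derivative_comp_eq_zero {R ι : Type*} [CommRing R] {s : Finset ι}
    {B a : ι → R} {P : R[X]} (h : ∑ j ∈ s, C (B j) * P.comp (X - C (a j)) = 0) :
    ∑ j ∈ s, C (B j) * (derivative P).comp (X - C (a j)) = 0 := by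
  simpa [derivative_comp] using congrArg derivative h

theorem degree_derivative_lt_of_degree_lt_succ {R : Type*} [Semiring R] {r : R[X]} {n : ℕ}
    (hr : r.degree < ↑(n + 1)) : (derivative r).degree < n := by
  rw [degree_lt_iff_coeff_zero] at hr ⊢
  intro k hk
  rw [coeff_derivative, hr (k + 1) (by omega), zero_mul]

theorem derivative_add_smul_ne_zero {R : Type*} [Semiring R] [NoZeroDivisors R] {c : R}
    (hc : c ≠ 0) {s : R[X]} (hs : s ≠ 0) : derivative s + c • s ≠ 0 := by
  intro h
  have := congrArg (coeff · s.natDegree) h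
  simp only [coeff_add, coeff_smul, coeff_derivative, coeff_natDegree_succ_eq_zero, smul_eq_mul,
    coeff_zero, zero_mul, zero_add] at this
  exact mul_ne_zero hc (leadingCoeff_ne_zero.2 hs) this

theorem degree_derivative_add_smul_le {R : Type*} [Semiring R] (c : R) (s : R[X]) :
    (derivative s + c • s).degree ≤ s.degree :=
  (degree_add_le _ _).trans (max_le (degree_derivative_le) (degree_smul_le _ _))

/-- Evaluating the identity at `0` kills `P(-X)`; the same holds for `P', P'', …`, and the
reflections of these have every degree `≤ natDegree P`. -/
theorem degreeLT_le_ker_of_sum_C_mul_comp_eq_zero {K ι : Type*} [Field K] [CharZero K]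
    {s : Finset ι} {B a : ι → K} {P : K[X]} (hP : P ≠ 0)
    (h : ∑ j ∈ s, C (B j) * P.comp (X - C (a j)) = 0) :
    K[X]_(P.natDegree + 1) ≤ LinearMap.ker (∑ j ∈ s, B j • leval (a j)) := by
  induction hn : P.natDegree using Nat.strong_induction_on generalizing P with
  | _ n ih =>
  have hlow : K[X]_n ≤ LinearMap.ker (∑ j ∈ s, B j • leval (a j)) := by
    match n with
    | 0 => exact fun q hq => by simp_all [mem_degreeLT]
    | k + 1 =>
      exact ih k k.lt_succ_self (derivative_ne_zero.2 (by omega))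
        (sum_C_mul_derivative_comp_eq_zero h) (by simp [hn])
  have hdeg : (P.comp (-X)).degree = n := by
    rw [degree_comp_neg_X, degree_eq_natDegree hP, hn]
  have hker : P.comp (-X) ∈ LinearMap.ker (∑ j ∈ s, B j • leval (a j)) := by
    simpa [eval_finsetSum] using congrArg (eval 0) h
  exact (degreeLT_succ_le_sup_span hdeg).trans
    (sup_le hlow ((Submodule.span_singleton_le_iff_mem _ _).2 hker))

theorem exists_finset_deriv_eq_zero_card_le {g : ℝ → ℝ} (hg : Differentiable ℝ g)
    {Z : Finset ℝ} (hZ : ∀ x ∈ Z, g x = 0) :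
    ∃ t : Finset ℝ, (∀ z ∈ t, deriv g z = 0) ∧ #Z ≤ #t + 1 := by
  have rolle : ∀ x ∈ Z, ∀ y ∈ Z, x < y → ∃ z ∈ Set.Ioo x y, deriv g z = 0 :=
    fun x hx y hy hxy =>
      exists_deriv_eq_zero hxy hg.continuous.continuousOn ((hZ x hx).trans (hZ y hy).symm)
  choose! z hz hz0 using rolle
  refine ⟨((Z ×ˢ Z).filter fun q => q.1 < q.2).image fun q => z q.1 q.2, ?_, ?_⟩
  · simp only [mem_image, mem_filter, mem_product, Prod.exists]
    rintro _ ⟨x, y, ⟨⟨hx, hy⟩, hxy⟩, rfl⟩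
    exact hz0 x hx y hy hxy
  · refine card_le_of_interleaved fun x hx y hy hxy _ => ⟨z x y, ?_, hz x hx y hy hxy⟩
    exact mem_image.2 ⟨(x, y), by simp [hx, hy, hxy], rfl⟩

noncomputable def polyExp (c : ℝ) (r s : ℝ[X]) (x : ℝ) : ℝ :=
  r.eval x + s.eval x * Real.exp (c * x)

theorem hasDerivAt_polyExp (c : ℝ) (r s : ℝ[X]) (x : ℝ) :
    HasDerivAt (polyExp c r s) (polyExp c (derivative r) (derivative s + c • s) x) x := by
  have hexp : HasDerivAt (fun x => Real.exp (c * x)) (Real.exp (c * x) * c) x := by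
    simpa using ((hasDerivAt_id x).const_mul c).exp
  refine ((r.hasDerivAt x).add ((s.hasDerivAt x).mul hexp)).congr_deriv ?_
  simp only [polyExp, eval_add, eval_smul, smul_eq_mul]
  ring

/-- Differentiation lowers `deg r`, keeps `deg s` (as `c ≠ 0`), and loses at most one zero. -/
theorem card_lt_of_polyExp_eq_zero {c : ℝ} (hc : c ≠ 0) {n n' : ℕ} {r s : ℝ[X]}
    (hr : r.degree < n) (hs : s.degree < n') (hrs : r ≠ 0 ∨ s ≠ 0)
    {Z : Finset ℝ} (hZ : ∀ x ∈ Z, polyExp c r s x = 0) : #Z < n + n' := by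
  induction n generalizing r s Z with
  | zero =>
    have hs0 : s ≠ 0 := hrs.resolve_left (by simpa using hr)
    have hZs : Z.val ⊆ s.roots := fun x hx => by
      simpa [mem_roots hs0, polyExp, (by simpa using hr : r = 0), Real.exp_ne_zero] using hZ x hx
    have := card_le_degree_of_subset_roots hZs
    have := (natDegree_lt_iff_degree_lt hs0).2 hs
    omega
  | succ n ih =>
    by_cases hs0 : s = 0
    · have hr0 : r ≠ 0 := hrs.resolve_right (not_not.2 hs0)
      have hZr : Z.val ⊆ r.roots := fun x hx => by
        simpa [mem_roots hr0, polyExp, hs0] using hZ x hx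
      have := card_le_degree_of_subset_roots hZr
      have := (natDegree_lt_iff_degree_lt hr0).2 hr
      omega
    · obtain ⟨t, ht, hZt⟩ := exists_finset_deriv_eq_zero_card_le
        (fun x => (hasDerivAt_polyExp c r s x).differentiableAt) hZ
      have ht' : ∀ z ∈ t, polyExp c (derivative r) (derivative s + c • s) z = 0 :=
        fun z hz => (hasDerivAt_polyExp c r s z).deriv ▸ ht z hz
      have := ih (degree_derivative_lt_of_degree_lt_succ hr)
        ((degree_derivative_add_smul_le c s).trans_lt hs)
        (Or.inr (derivative_add_smul_ne_zero hc hs0)) ht'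
      omega

/-- After padding `G` to `2n` points, evaluation there is injective by
`card_lt_of_polyExp_eq_zero`, hence bijective by counting dimensions. -/
theorem exists_polyExp_eq_on {c : ℝ} (hc : c ≠ 0) {n : ℕ} {G : Finset ℝ} (hG : #G ≤ 2 * n)
    (u : ℝ → ℝ) : ∃ r ∈ ℝ[X]_n, ∃ s ∈ ℝ[X]_n, ∀ x ∈ G, polyExp c r s x = u x := by
  obtain ⟨H, hGH, hH⟩ := Infinite.exists_superset_card_eq G (2 * n) hG
  let Φ : (ℝ[X]_n × ℝ[X]_n) →ₗ[ℝ] (H → ℝ) := LinearMap.pi fun x =>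
    leval (x : ℝ) ∘ₗ (ℝ[X]_n).subtype ∘ₗ LinearMap.fst ℝ _ _ +
      Real.exp (c * x) • leval (x : ℝ) ∘ₗ (ℝ[X]_n).subtype ∘ₗ LinearMap.snd ℝ _ _
  have hΦ (w : ℝ[X]_n × ℝ[X]_n) (x : H) : Φ w x = polyExp c w.1 w.2 x := by
    simp [Φ, polyExp, mul_comm]
  have hinj : Function.Injective Φ := by
    rw [← LinearMap.ker_eq_bot, Submodule.eq_bot_iff]
    rintro ⟨r, s⟩ hw
    by_contra hne
    have hrs : (r : ℝ[X]) ≠ 0 ∨ (s : ℝ[X]) ≠ 0 := by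
      by_contra! h
      exact hne (Prod.ext (Subtype.ext h.1) (Subtype.ext h.2))
    have := card_lt_of_polyExp_eq_zero hc (mem_degreeLT.1 r.2) (mem_degreeLT.1 s.2) hrs
      (Z := H) fun x hx => by simpa [hΦ] using congrFun (LinearMap.mem_ker.1 hw) ⟨x, hx⟩
    omega
  have hdim : Module.finrank ℝ (ℝ[X]_n × ℝ[X]_n) = Module.finrank ℝ (H → ℝ) := by
    rw [Module.finrank_eq_card_basis (degreeLT.basisProd ℝ n n), Module.finrank_fintype_fun_eq_card,
      Fintype.card_fin, Fintype.card_coe, hH, two_mul]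
  obtain ⟨w, hw⟩ := (LinearMap.injective_iff_surjective_of_finrank_eq_finrank hdim).1 hinj
    fun x => u x
  exact ⟨w.1, w.1.2, w.2, w.2.2, fun x hx => by simpa [hΦ] using congrFun hw ⟨x, hGH hx⟩⟩

noncomputable def maternPolynomial (p : ℕ) (c : ℝ) : ℝ[X] :=
  C ((p.factorial : ℝ) / ((2 * p).factorial : ℝ)) *
    ∑ j ∈ range (p + 1),
      C (((p + j).factorial : ℝ) / ((j.factorial : ℝ) * ((p - j).factorial : ℝ))) *
        (C (2 * c) * X) ^ (p - j)

theorem eval_maternPolynomial (p : ℕ) (c u : ℝ) :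
    (maternPolynomial p c).eval u = maternPoly p c u := by
  simp [maternPolynomial, maternPoly, eval_finsetSum]

theorem coeff_maternPolynomial_ne_zero (p : ℕ) {c : ℝ} (hc : c ≠ 0) :
    (maternPolynomial p c).coeff p ≠ 0 := by
  simp only [maternPolynomial, coeff_C_mul, finsetSum_coeff, mul_pow, ← C_pow, coeff_X_pow]
  rw [sum_eq_single 0 (fun j hj hj0 => by simp only [mem_range] at hj; simp; omega) (by simp)]
  simp [hc, Nat.factorial_ne_zero]

theorem maternKernel_eq_of_le (p : ℕ) (c : ℝ) {x a : ℝ} (h : a ≤ x) :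
    maternKernel p c x a =
      Real.exp (-(c * x)) * (Real.exp (c * a) * (maternPolynomial p c).eval (x - a)) := by
  rw [maternKernel, abs_of_nonneg (sub_nonneg.2 h), eval_maternPolynomial, mul_left_comm,
    ← mul_assoc, ← Real.exp_add]
  ring_nf

theorem maternKernel_neg_neg (p : ℕ) (c x a : ℝ) :
    maternKernel p c (-x) (-a) = maternKernel p c x a := by
  rw [maternKernel, maternKernel, neg_sub_neg, abs_sub_comm]

theorem sum_mul_exp_mul_eval_eq_zero_of_eventually_atTop {ι : Type*} [Fintype ι] {p : ℕ} {c : ℝ}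
    (hc : c ≠ 0) {a A : ι → ℝ} (h : ∀ᶠ x in atTop, ∑ j, A j * maternKernel p c x (a j) = 0) :
    ∀ q ∈ ℝ[X]_(p + 1), ∑ j, A j * Real.exp (c * a j) * q.eval (a j) = 0 := by
  set P := maternPolynomial p c
  set Q := ∑ j, C (A j * Real.exp (c * a j)) * P.comp (X - C (a j))
  have hQ : ∀ᶠ x in atTop, Q.eval x = 0 := by
    filter_upwards [h, eventually_all.2 fun j => eventually_ge_atTop (a j)] with x hx hax
    simp_rw [maternKernel_eq_of_le p c (hax _), mul_left_comm _ (Real.exp (-(c * x))),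
      ← mul_sum, mul_eq_zero, Real.exp_ne_zero, false_or] at hx
    simpa [Q, eval_finsetSum, mul_assoc] using hx
  have hQ0 : Q = 0 := eq_zero_of_infinite_isRoot Q <|
    Set.infinite_of_forall_exists_gt fun y => (hQ.and (eventually_gt_atTop y)).exists
  have hP : P ≠ 0 := fun h0 => coeff_maternPolynomial_ne_zero p hc (by simp [P, h0])
  intro q hq
  have := degreeLT_le_ker_of_sum_C_mul_comp_eq_zero hP hQ0
    (degreeLT_mono (Nat.succ_le_succ (le_natDegree_of_ne_zero
      (coeff_maternPolynomial_ne_zero p hc))) hq)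
  simpa [mul_assoc] using this

theorem sum_mul_exp_neg_mul_eval_eq_zero_of_eventually_atBot {ι : Type*} [Fintype ι] {p : ℕ}
    {c : ℝ} (hc : c ≠ 0) {a A : ι → ℝ}
    (h : ∀ᶠ x in atBot, ∑ j, A j * maternKernel p c x (a j) = 0) :
    ∀ q ∈ ℝ[X]_(p + 1), ∑ j, A j * Real.exp (-(c * a j)) * q.eval (a j) = 0 := by
  have h' : ∀ᶠ x in atTop, ∑ j, A j * maternKernel p c x (-a j) = 0 := by
    filter_upwards [tendsto_neg_atTop_atBot.eventually h] with x hx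
    simpa [← maternKernel_neg_neg p c x] using hx
  intro q hq
  simpa using sum_mul_exp_mul_eval_eq_zero_of_eventually_atTop hc h' (q.comp (-X))
    (by simpa [mem_degreeLT] using hq)

theorem no_kernel_packet_of_low_degree_general
    (p : ℕ) (c : ℝ) (hc : 0 < c)
    (m : ℕ) (hmk : m < 2 * p + 3)
    (a : Fin m → ℝ) (ha : Function.Injective a)
    (A : Fin m → ℝ)
    (φ : ℝ → ℝ) (hφ : ∀ x, φ x = ∑ j, A j * maternKernel p c x (a j))
    (hsupp : HasCompactSupport φ) :
    ∀ j, A j = 0 := by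
  have hφ0 : ∀ᶠ x in cocompact ℝ, ∑ j, A j * maternKernel p c x (a j) = 0 :=
    mem_of_superset hsupp.isCompact.compl_mem_cocompact fun x hx =>
      (hφ x).symm.trans (image_eq_zero_of_notMem_tsupport hx)
  have hright := sum_mul_exp_mul_eval_eq_zero_of_eventually_atTop hc.ne' (atTop_le_cocompact hφ0)
  have hleft := sum_mul_exp_neg_mul_eval_eq_zero_of_eventually_atBot hc.ne'
    (atBot_le_cocompact hφ0)
  intro j₀
  obtain ⟨s, hs, r, hr, hsr⟩ := exists_polyExp_eq_on (mul_ne_zero two_ne_zero hc.ne')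
    (G := univ.image a) (n := p + 1) ((card_image_le.trans_eq (card_fin m)).trans (by omega))
    fun x => if x = a j₀ then Real.exp (c * a j₀) else 0
  have hinterp (j : Fin m) :
      polyExp (2 * c) s r (a j) = if j = j₀ then Real.exp (c * a j₀) else 0 := by
    simp_rw [hsr _ (mem_image_of_mem a (mem_univ j)), ha.eq_iff]
  have hexp (x : ℝ) : Real.exp (-(c * x)) * Real.exp (2 * c * x) = Real.exp (c * x) := by
    rw [← Real.exp_add]; ring_nf
  calc A j₀ = ∑ j, A j * Real.exp (-(c * a j)) * polyExp (2 * c) s r (a j) := by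
        simp_rw [hinterp, mul_ite, mul_zero, sum_ite_eq', mem_univ, if_true, mul_assoc,
          ← Real.exp_add, neg_add_cancel, Real.exp_zero, mul_one]
    _ = ∑ j, A j * Real.exp (-(c * a j)) * s.eval (a j) +
          ∑ j, A j * Real.exp (c * a j) * r.eval (a j) := by
        rw [← sum_add_distrib]
        refine sum_congr rfl fun j _ => ?_
        rw [polyExp, ← hexp]
        ring
    _ = 0 := by rw [hleft s hs, hright r hr, add_zero]

/-- For the half-integer Matérn kernel with smoothness `ν = p + 1/2`
(`c > 0`), there is no kernel packet of degree `m < 2ν + 2 = 2p + 3`: if `a_1, …, a_m` are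
distinct and `φ(x) = ∑_j A_j K(x, a_j)` has compact support, then all `A_j = 0`. -/
theorem no_kernel_packet_of_low_degree
    (p : ℕ) (c : ℝ) (hc : 0 < c)
    (m : ℕ) (hm : 0 < m) (hmk : m < 2 * p + 3)
    (a : Fin m → ℝ) (ha : Function.Injective a)
    (A : Fin m → ℝ)
    (φ : ℝ → ℝ) (hφ : ∀ x, φ x = ∑ j, A j * maternKernel p c x (a j))
    (hsupp : HasCompactSupport φ) :
    ∀ j, A j = 0 :=
  no_kernel_packet_of_low_degree_general p c hc m hmk a ha A φ hφ hsupp
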